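/- arXiv:2602.15594 — 2 statements merged into one kernel-verified Lean document; each statement's English description precedes it below -/
import Mathlib

section
/- Pruning rule correctness: let δ ≥ 0, β ∈ ℝ, let π be a feasible path (so R(π) ≥ β), and let π̂' = π' ⧺ π̄' be a hybrid path through vertex v where π̄' maximizes μ_δ among v-to-p paths. If μ_δ(π̂') ≤ V(π) + δ·β, then every feasible s-to-p path extending π' (i.e., of the form π' ⧺ σ with R(π' ⧺ σ) ≥ β) has value V(π' ⧺ σ) ≤ V(π). Hence π' can be discarded without losing any strictly better solution. -/
def pathVal {A : Type*} (V : A → ℝ) (π : List A) : ℝ := (π.map V).sum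

def muPath {A : Type*} (V R : A → ℝ) (δ : ℝ) (π : List A) : ℝ :=
  pathVal V π + δ * pathVal R π

theorem stmt_13 {A : Type*} (V R : A → ℝ) (δ : ℝ) (hδ : 0 ≤ δ) (β : ℝ)
    (isVPpath : List A → Prop)       -- "is a path from v to p"
    (π : List A) (hπfeas : β ≤ pathVal R π)   -- known feasible path
    (π' πbar' : List A) (hπbar' : isVPpath πbar')
    (hmax : ∀ σ : List A, isVPpath σ →
      muPath V R δ (π' ++ σ) ≤ muPath V R δ (π' ++ πbar'))
    (hprune : muPath V R δ (π' ++ πbar') ≤ pathVal V π + δ * β) :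
    ∀ σ : List A, isVPpath σ → β ≤ pathVal R (π' ++ σ) →
      pathVal V (π' ++ σ) ≤ pathVal V π := by
  intro σ hσ hR
  have h := hmax σ hσ
  simp only [muPath] at h hprune
  nlinarith [mul_le_mul_of_nonneg_left hR hδ]
end

section
/- Weak dominance rule correctness: let π and π' be two s-to-u paths with R(π) = R(π') and V(π) ≥ V(π'). Then for every u-to-p path σ, the extension π ⧺ σ satisfies R(π ⧺ σ) = R(π' ⧺ σ), satisfies exactly the same window constraints at every vertex of σ as π' ⧺ σ does, and V(π ⧺ σ) ≥ V(π' ⧺ σ). Hence every feasible completion of π' is matched by a feasible completion of π of at least equal value. -/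
lemma pathVal_append {A : Type*} (V : A → ℝ) (l m : List A) :
    pathVal V (l ++ m) = pathVal V l + pathVal V m := by
  simp [pathVal]

theorem stmt_14 {A : Type*} (V R : A → ℝ)
    (π π' : List A)
    (hR : pathVal R π = pathVal R π')
    (hV : pathVal V π' ≤ pathVal V π) :
    ∀ σ : List A,
      pathVal R (π ++ σ) = pathVal R (π' ++ σ) ∧
      pathVal V (π' ++ σ) ≤ pathVal V (π ++ σ) ∧
      (∀ τ : List A, τ <+: σ → ∀ lo hi : ℝ,
        (lo ≤ pathVal R (π ++ τ) ∧ pathVal R (π ++ τ) ≤ hi) ↔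
        (lo ≤ pathVal R (π' ++ τ) ∧ pathVal R (π' ++ τ) ≤ hi)) := by
  intro σ
  refine ⟨by simp [pathVal_append, hR], by simp [pathVal_append, hV], ?_⟩
  intro τ _ lo hi
  simp [pathVal_append, hR]
end
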